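/- arXiv:2404.00731 — 10 statements merged into one kernel-verified Lean document; each statement's English description precedes it below -/
import Mathlib

section
/- Let K be a field of characteristic 0, let p ∈ K[x] be a polynomial of degree m ≥ 1 with roots α₁,…,α_m in an algebraic closure of K and leading coefficient ℓ. Let f = q/h be a nonconstant rational function with q, h ∈ K[x], and set e = max(deg h, deg q) − deg h. If p and h have no common root in the algebraic closure, then ∏_{i=1}^m (x − f(α_i)) = Res_y(p(y), h(y)·x − q(y)) / (Res(p,h) · ℓ^e) as polynomials in K[x]. -/
/-!
Reversing rows and columns and transposing turns the Sylvester matrix used here into Mathlib's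
`Polynomial.sylvester`, so the resultant is Mathlib's `Polynomial.resultant`. Over any nontrivial
commutative ring, `Res(a ∏ᵢ (X - αᵢ), g) = a ^ deg g ∏ᵢ g(αᵢ)` (multiplicativity of the
resultant and `Res(X - r, g) = g(r)`). Applied over `K̄` and over `K̄[x]` this gives
`Res(p, h) = ℓ ^ deg h ∏ᵢ h(αᵢ)` and `Res_y(p(y), h(y)x - q(y)) = ℓ ^ d ∏ᵢ (h(αᵢ)x - q(αᵢ))` with
`d = deg_y (h(y)x - q(y)) = max(deg h, deg q) = deg h + e`; finally
`h(αᵢ)x - q(αᵢ) = h(αᵢ)(x - f(αᵢ))` since `h(αᵢ) ≠ 0`.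
-/

noncomputable section
open Polynomial

/-- The Sylvester matrix of two polynomials `p`, `q` (of sizes given by their degrees):
the first `q.natDegree` rows carry the coefficients of `p`, the remaining `p.natDegree`
rows those of `q`. -/
def sylvester {R : Type*} [CommRing R] (p q : R[X]) :
    Matrix (Fin (p.natDegree + q.natDegree)) (Fin (p.natDegree + q.natDegree)) R :=
  fun i j =>
    if (i : ℕ) < q.natDegree then
      (if (i : ℕ) ≤ (j : ℕ) ∧ (j : ℕ) ≤ (i : ℕ) + p.natDegree then
        p.coeff (p.natDegree + (i : ℕ) - (j : ℕ)) else 0)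
    else
      (if (i : ℕ) - q.natDegree ≤ (j : ℕ) ∧ (j : ℕ) ≤ (i : ℕ) - q.natDegree + q.natDegree then
        q.coeff (q.natDegree + ((i : ℕ) - q.natDegree) - (j : ℕ)) else 0)

/-- The resultant of two polynomials, as the determinant of their Sylvester matrix. -/
def resultant {R : Type*} [CommRing R] (p q : R[X]) : R := (_root_.sylvester p q).det

theorem sylvester_eq_transpose_submatrix_rev {R : Type*} [CommRing R] (p q : R[X]) :
    _root_.sylvester p q =
      ((Polynomial.sylvester p q p.natDegree q.natDegree).submatrix Fin.rev Fin.rev).transpose := by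
  ext i j
  have hj := j.isLt
  simp only [Matrix.transpose_apply, Matrix.submatrix_apply, _root_.sylvester,
    Polynomial.sylvester, Matrix.of_apply]
  by_cases hi : (i : ℕ) < q.natDegree
  · have hrev : Fin.rev i = Fin.natAdd p.natDegree ⟨q.natDegree - 1 - i, by omega⟩ := by
      ext; simp; omega
    rw [hrev, Fin.addCases_right, if_pos hi]
    simp only [Set.mem_Icc, Fin.val_rev]
    split_ifs <;> first | rfl | (congr 1; omega)
  · have hrev : Fin.rev i = Fin.castAdd q.natDegree ⟨p.natDegree + q.natDegree - 1 - i, by omega⟩ := by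
      ext; simp; omega
    rw [hrev, Fin.addCases_left, if_neg hi]
    simp only [Set.mem_Icc, Fin.val_rev]
    split_ifs <;> first | rfl | (congr 1; omega)

theorem resultant_eq_polynomial_resultant {R : Type*} [CommRing R] (p q : R[X]) :
    _root_.resultant p q = p.resultant q := by
  rw [_root_.resultant, sylvester_eq_transpose_submatrix_rev, Matrix.det_transpose]
  exact Matrix.det_submatrix_equiv_self Fin.revPerm _

namespace Polynomial

theorem resultant_C_mul_prod_X_sub_C {R ι : Type*} [CommRing R] [Nontrivial R]
    (a : R) (s : Finset ι) (α : ι → R) (g : R[X]) {n : ℕ} (hg : g.natDegree ≤ n) :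
    (C a * ∏ i ∈ s, (X - C (α i))).resultant g s.card n = a ^ n * ∏ i ∈ s, g.eval (α i) := by
  rw [resultant_C_mul_left, ← natDegree_finsetProd_X_sub_C_eq_card s α,
    resultant_prod_left _ _ _ _ (by simp) hg]
  simp only [natDegree_X_sub_C, resultant_X_sub_C_left _ _ _ hg]

theorem natDegree_map_C_mul_C_X_sub_map_C {R : Type*} [CommRing R] {h : R[X]} (hh : h ≠ 0)
    (q : R[X]) :
    (h.map C * C X - q.map C : R[X][X]).natDegree = max h.natDegree q.natDegree := by
  refine natDegree_eq_of_le_of_coeff_ne_zero ?_ ?_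
  · refine (natDegree_sub_le _ _).trans (max_le_max ?_ ?_)
    · exact (natDegree_mul_C_le _ _).trans natDegree_map_le
    · exact natDegree_map_le
  · rw [coeff_sub, coeff_mul_C, coeff_map, coeff_map]
    rcases le_or_gt q.natDegree h.natDegree with hqh | hhq
    · rw [max_eq_left hqh]
      intro H
      simpa [hh] using congrArg (coeff · 1) H
    · have hq : q ≠ 0 := by rintro rfl; simp at hhq
      rw [max_eq_right hhq.le, coeff_eq_zero_of_natDegree_lt hhq]
      simpa using hq

theorem map_mapRingHom_map_C_mul_C_X_sub_map_C {R S : Type*} [CommRing R] [CommRing S]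
    (φ : R →+* S) (h q : R[X]) :
    (h.map C * C X - q.map C : R[X][X]).map (mapRingHom φ) =
      (h.map φ).map C * C X - (q.map φ).map C := by
  simp [Polynomial.map_map, mapRingHom_comp_C]

theorem eval_C_map_C_mul_C_X_sub_map_C {R : Type*} [CommRing R] (h q : R[X]) (z : R) :
    (h.map C * C X - q.map C : R[X][X]).eval (C z) = C (h.eval z) * X - C (q.eval z) := by
  simp [eval_map]

theorem X_sub_C_div_mul_C {F : Type*} [Field F] (a : F) {b : F} (hb : b ≠ 0) :
    (X - C (a / b)) * C b = C b * X - C a := by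
  rw [sub_mul, ← C_mul, div_mul_cancel₀ _ hb, mul_comm]

theorem map_resultant_of_map_eq_C_mul_prod {R S ι : Type*} [CommRing R] [CommRing S]
    [Nontrivial S] (φ : R →+* S) {p : R[X]} {s : Finset ι} (hp : p.natDegree = s.card)
    {a : S} {α : ι → S} (hsplit : p.map φ = C a * ∏ i ∈ s, (X - C (α i))) (g : R[X]) :
    φ (p.resultant g) = a ^ g.natDegree * ∏ i ∈ s, (g.map φ).eval (α i) := by
  rw [← resultant_map_map, hsplit, hp]
  exact resultant_C_mul_prod_X_sub_C a s α _ natDegree_map_le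

end Polynomial

open Finset

theorem stmt_0_general (K : Type*) [Field K]
    (p : K[X]) (m : ℕ) (hdeg : p.natDegree = m)
    (ℓ : K)
    (α : Fin m → AlgebraicClosure K)
    (hsplit : p.map (algebraMap K (AlgebraicClosure K)) =
      C (algebraMap K (AlgebraicClosure K) ℓ) * ∏ i : Fin m, (X - C (α i)))
    (q h : K[X]) (hh : h ≠ 0)
    (e : ℕ) (he : e = max h.natDegree q.natDegree - h.natDegree)
    (hnocommon : ∀ z : AlgebraicClosure K,
      (p.map (algebraMap K (AlgebraicClosure K))).eval z = 0 →
      (h.map (algebraMap K (AlgebraicClosure K))).eval z ≠ 0) :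
    (∏ i : Fin m,
        ((X : (AlgebraicClosure K)[X]) -
          C ((q.map (algebraMap K (AlgebraicClosure K))).eval (α i) /
             (h.map (algebraMap K (AlgebraicClosure K))).eval (α i)))) *
      C (algebraMap K (AlgebraicClosure K) (_root_.resultant p h * ℓ^e)) =
    (_root_.resultant (p.map (C : K →+* K[X]))
        (h.map (C : K →+* K[X]) * C (X : K[X]) - q.map (C : K →+* K[X]))).map
      (algebraMap K (AlgebraicClosure K)) := by
  set φ := algebraMap K (AlgebraicClosure K)
  have hα : ∀ i, (h.map φ).eval (α i) ≠ 0 := fun i ↦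
    hnocommon (α i) (by simp [hsplit, eval_prod, prod_eq_zero (mem_univ i)])
  have hP : (p.map C).map (mapRingHom φ) = C (C (φ ℓ)) * ∏ i, (X - C (C (α i))) := by
    rw [Polynomial.map_map, mapRingHom_comp_C, ← Polynomial.map_map, hsplit]
    simp [Polynomial.map_prod]
  have hres_ph := map_resultant_of_map_eq_C_mul_prod φ (by simp [hdeg]) hsplit h
  have hres_pg := map_resultant_of_map_eq_C_mul_prod (mapRingHom φ)
    (by simp [natDegree_map_eq_of_injective C_injective, hdeg]) hP (h.map C * C X - q.map C)
  simp only [natDegree_map_C_mul_C_X_sub_map_C hh, map_mapRingHom_map_C_mul_C_X_sub_map_C,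
    eval_C_map_C_mul_C_X_sub_map_C, coe_mapRingHom] at hres_pg
  have hd : h.natDegree + e = max h.natDegree q.natDegree := by
    rw [he, Nat.add_sub_cancel' (le_max_left _ _)]
  rw [resultant_eq_polynomial_resultant, resultant_eq_polynomial_resultant,
    natDegree_map_C_mul_C_X_sub_map_C hh, hres_pg,
    ← prod_congr rfl fun i _ ↦ X_sub_C_div_mul_C _ (hα i), prod_mul_distrib, ← hd,
    map_mul, map_pow, hres_ph, map_mul, map_mul, map_prod, map_pow, map_pow, pow_add]
  ring

/-- Let `K` be a field of characteristic zero, `p ∈ K[x]` of degree `m ≥ 1` with leading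
coefficient `ℓ` and roots `α₁, …, α_m` in `K̄`, and let `f = q/h` be a nonconstant rational
function, `e = max(deg h, deg q) − deg h`. If `p` and `h` have no common root in `K̄`, then
`∏ᵢ (x − f(αᵢ)) · (Res(p,h)·ℓᵉ) = Res_y(p(y), h(y)·x − q(y))` in `K̄[x]`. -/
theorem stmt_0 (K : Type*) [Field K] [CharZero K]
    (p : K[X]) (m : ℕ) (hm : 1 ≤ m) (hdeg : p.natDegree = m)
    (ℓ : K) (hl : p.leadingCoeff = ℓ)
    (α : Fin m → AlgebraicClosure K)
    (hsplit : p.map (algebraMap K (AlgebraicClosure K)) =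
      C (algebraMap K (AlgebraicClosure K) ℓ) * ∏ i : Fin m, (X - C (α i)))
    (q h : K[X]) (hh : h ≠ 0)
    (hnonconst : ¬ ∃ k : K, q = C k * h)
    (e : ℕ) (he : e = max h.natDegree q.natDegree - h.natDegree)
    (hnocommon : ∀ z : AlgebraicClosure K,
      (p.map (algebraMap K (AlgebraicClosure K))).eval z = 0 →
      (h.map (algebraMap K (AlgebraicClosure K))).eval z ≠ 0) :
    (∏ i : Fin m,
        ((X : (AlgebraicClosure K)[X]) -
          C ((q.map (algebraMap K (AlgebraicClosure K))).eval (α i) /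
             (h.map (algebraMap K (AlgebraicClosure K))).eval (α i)))) *
      C (algebraMap K (AlgebraicClosure K) (_root_.resultant p h * ℓ^e)) =
    (_root_.resultant (p.map (C : K →+* K[X]))
        (h.map (C : K →+* K[X]) * C (X : K[X]) - q.map (C : K →+* K[X]))).map
      (algebraMap K (AlgebraicClosure K)) :=
  stmt_0_general K p m hdeg ℓ α hsplit q h hh e he hnocommon

end
end

section
/- For every rational number c ∉ {0, 1, −1}, the point 0 is a periodic point of exact period 4 for the rational map φ_c(x) = ((c + c² − c³)x − c²)/((c³ − c² − c + 1)x² − (c³ − c² − c)x − c²); specifically, the orbit of 0 under φ_c is 0 ↦ 1 ↦ c ↦ −c/(c² − c − 1) ↦ 0, and these four points are distinct. -/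
/-- The quadratic rational map `φ_c` on `ℙ¹(ℚ) = ℚ ∪ {∞}` (with `∞` encoded as `none`),
given by `φ_c(x) = ((c + c² − c³)x − c²)/((c³ − c² − c + 1)x² − (c³ − c² − c)x − c²)`.
Since the denominator has larger degree than the numerator, `φ_c(∞) = 0`. -/
noncomputable def phiC4 (c : ℚ) : Option ℚ → Option ℚ
  | none => some 0
  | some x =>
      if (c^3 - c^2 - c + 1)*x^2 - (c^3 - c^2 - c)*x - c^2 = 0 then none
      else some (((c + c^2 - c^3)*x - c^2) /
        ((c^3 - c^2 - c + 1)*x^2 - (c^3 - c^2 - c)*x - c^2))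

/-! Each step of the orbit is checked by factoring the denominator of `φ_c` at the current
point and clearing it; the only non-trivial non-vanishing is `c² − c − 1 ≠ 0`, which holds
because its discriminant `5` is not a rational square. -/

lemma sq_sub_self_sub_one_ne_zero (c : ℚ) : c^2 - c - 1 ≠ 0 := by
  intro h
  have h5 : IsSquare (5 : ℚ) := ⟨2*c - 1, by linear_combination (-4 : ℚ) * h⟩
  rw [Rat.isSquare_iff] at h5
  norm_num at h5

def phiC4Num (c x : ℚ) : ℚ := (c + c^2 - c^3)*x - c^2

def phiC4Den (c x : ℚ) : ℚ := (c^3 - c^2 - c + 1)*x^2 - (c^3 - c^2 - c)*x - c^2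

lemma phiC4_some_eq_some {c x y : ℚ} (hden : phiC4Den c x ≠ 0)
    (hnum : phiC4Num c x = y * phiC4Den c x) :
    phiC4 c (some x) = some y := by
  change (if phiC4Den c x = 0 then none else some (phiC4Num c x / phiC4Den c x)) = some y
  rw [if_neg hden, hnum, mul_div_cancel_right₀ _ hden]

variable {c : ℚ}

lemma neg_div_ne_zero (hc0 : c ≠ 0) : -c/(c^2 - c - 1) ≠ 0 :=
  div_ne_zero (neg_ne_zero.mpr hc0) (sq_sub_self_sub_one_ne_zero c)

lemma phiC4_zero (hc0 : c ≠ 0) : phiC4 c (some 0) = some 1 :=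
  phiC4_some_eq_some (by simp [phiC4Den, hc0]) (by simp [phiC4Num, phiC4Den])

lemma phiC4_one (hc1 : c ≠ 1) (hcm1 : c ≠ -1) : phiC4 c (some 1) = some c := by
  have hden : phiC4Den c 1 = (1 - c) * (1 + c) := by unfold phiC4Den; ring
  refine phiC4_some_eq_some ?_ (by rw [hden]; unfold phiC4Num; ring)
  rw [hden]
  exact mul_ne_zero (sub_ne_zero.mpr hc1.symm) (fun h ↦ hcm1 (by linear_combination h))

lemma phiC4_self (hc0 : c ≠ 0) (hc1 : c ≠ 1) :
    phiC4 c (some c) = some (-c/(c^2 - c - 1)) := by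
  have hq := sq_sub_self_sub_one_ne_zero c
  have hden : phiC4Den c c = (c^2 - c - 1) * (c^2 * (c - 1)) := by unfold phiC4Den; ring
  refine phiC4_some_eq_some ?_ ?_
  · rw [hden]
    exact mul_ne_zero hq (mul_ne_zero (pow_ne_zero 2 hc0) (sub_ne_zero.mpr hc1))
  · rw [hden, ← mul_assoc, div_mul_cancel₀ _ hq]; unfold phiC4Num; ring

lemma phiC4_neg_div (hc0 : c ≠ 0) (hc1 : c ≠ 1) (hcm1 : c ≠ -1) :
    phiC4 c (some (-c/(c^2 - c - 1))) = some 0 := by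
  set x := -c/(c^2 - c - 1)
  -- `c³ − c² − c = c (c² − c − 1)`, so the numerator and the linear part of the
  -- denominator both collapse at `x`.
  have hx : (c^2 - c - 1) * x = -c := mul_div_cancel₀ _ (sq_sub_self_sub_one_ne_zero c)
  have hden : phiC4Den c x = (c - 1)^2 * (c + 1) * x^2 := by
    unfold phiC4Den; linear_combination (-c) * hx
  refine phiC4_some_eq_some ?_
    (by rw [zero_mul]; unfold phiC4Num; linear_combination (-c) * hx)
  rw [hden]
  have hcp1 : c + 1 ≠ 0 := fun h ↦ hcm1 (by linear_combination h)
  have hcm1' : c - 1 ≠ 0 := sub_ne_zero.mpr hc1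
  have hx0 : x ≠ 0 := neg_div_ne_zero hc0
  positivity

lemma neg_div_ne_one (hc1 : c ≠ 1) (hcm1 : c ≠ -1) : -c/(c^2 - c - 1) ≠ 1 := by
  rw [Ne, div_eq_one_iff_eq (sq_sub_self_sub_one_ne_zero c)]
  intro h
  have : (c - 1) * (c + 1) = 0 := by linear_combination -h
  rcases mul_eq_zero.mp this with h | h
  · exact hc1 (by linear_combination h)
  · exact hcm1 (by linear_combination h)

lemma neg_div_ne_self (hc0 : c ≠ 0) (hc1 : c ≠ 1) : -c/(c^2 - c - 1) ≠ c := by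
  rw [Ne, div_eq_iff (sq_sub_self_sub_one_ne_zero c)]
  intro h
  have : c^2 * (c - 1) = 0 := by linear_combination -h
  rcases mul_eq_zero.mp this with h | h
  · exact hc0 (pow_eq_zero_iff two_ne_zero |>.mp h)
  · exact hc1 (by linear_combination h)

/-- For every rational `c ∉ {0, 1, −1}`, the point `0` is periodic of exact period 4 for
`φ_c`, with orbit `0 ↦ 1 ↦ c ↦ −c/(c² − c − 1) ↦ 0`, the four points being distinct. -/
theorem stmt_1 (c : ℚ) (hc0 : c ≠ 0) (hc1 : c ≠ 1) (hcm1 : c ≠ -1) :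
    phiC4 c (some 0) = some 1 ∧
    phiC4 c (some 1) = some c ∧
    phiC4 c (some c) = some (-c/(c^2 - c - 1)) ∧
    phiC4 c (some (-c/(c^2 - c - 1))) = some 0 ∧
    ([some 0, some 1, some c, some (-c/(c^2 - c - 1))] : List (Option ℚ)).Pairwise (· ≠ ·) ∧
    (phiC4 c)^[4] (some 0) = some 0 ∧
    ∀ n : ℕ, 0 < n → n < 4 → (phiC4 c)^[n] (some 0) ≠ some 0 := by
  have h0 := phiC4_zero hc0
  have h1 := phiC4_one hc1 hcm1
  have h2 := phiC4_self hc0 hc1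
  have h3 := phiC4_neg_div hc0 hc1 hcm1
  have hne0 := neg_div_ne_zero hc0
  refine ⟨h0, h1, h2, h3, ?_, ?_, ?_⟩
  · simp [hc0.symm, hc1.symm, hne0.symm, (neg_div_ne_one hc1 hcm1).symm,
      (neg_div_ne_self hc0 hc1).symm]
  · simp [h0, h1, h2, h3]
  · intro n hn hn4
    interval_cases n <;> simp [h0, h1, h2, hc0, hne0]
end

section
/- Let c ∈ ℚ \ {0, 4} and let α = (c + √(c(c−4)))/(2c) in an algebraic closure of ℚ. Then α and 1 − α are the two critical points of the map ψ_c(x) = (2x − 1)/(cx² − 1), and they form a 2-cycle under ψ_c: ψ_c(α) = 1 − α and ψ_c(1 − α) = α, with α ≠ 1 − α. -/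
/-!
The derivative of `(2x − 1)/(cx² − 1)` has numerator `−2(cx² − cx + 1)`, a quadratic invariant
under `x ↦ 1 − x` whose roots are `α` and `1 − α`. They are distinct because `2α − 1 = s/c` and
`s² = c(c − 4) ≠ 0`. For a root `a`, the relation `ca² = ca − 1` gives
`2a − 1 = (1 − a)(ca² − 1)`, so `ψ_c(a) = 1 − a` as soon as `a ≠ 1/2`.
-/

open Polynomial

/-- The numerator of the derivative of the rational map `N/D`. -/
noncomputable def critNum {K : Type*} [Field K] (N D : K[X]) : K[X] :=
  derivative N * D - N * derivative D

section

variable {K : Type*} [Field K] {c a : K}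

theorem critNum_two_mul_X_sub_one (c : K) :
    critNum (2 * X - 1) (C c * X ^ 2 - 1) = -2 * (C c * X ^ 2 - C c * X + 1) := by
  simp only [critNum, derivative_sub, derivative_mul, derivative_X, derivative_one,
    derivative_ofNat, derivative_C, derivative_X_pow, Nat.cast_ofNat, map_ofNat]
  ring

theorem quadratic_eq_mul_of_root (ha : c * a ^ 2 - c * a + 1 = 0) (x : K) :
    c * x ^ 2 - c * x + 1 = c * ((x - a) * (x - (1 - a))) := by
  linear_combination ha

theorem quadratic_root_one_sub (ha : c * a ^ 2 - c * a + 1 = 0) :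
    c * (1 - a) ^ 2 - c * (1 - a) + 1 = 0 := by
  linear_combination ha

theorem eval_critNum_eq_zero_iff (hc : (2 : K) * c ≠ 0) (ha : c * a ^ 2 - c * a + 1 = 0)
    (x : K) : (critNum (2 * X - 1) (C c * X ^ 2 - 1)).eval x = 0 ↔ x = a ∨ x = 1 - a := by
  have hc' : (-2 : K) * c ≠ 0 := by rwa [neg_mul, neg_ne_zero]
  have heval : (critNum (2 * X - 1) (C c * X ^ 2 - 1)).eval x
      = -2 * c * ((x - a) * (x - (1 - a))) := by
    simp only [critNum_two_mul_X_sub_one, eval_mul, eval_neg, eval_add, eval_sub, eval_pow,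
      eval_C, eval_X, eval_one, eval_ofNat, quadratic_eq_mul_of_root ha x]
    ring
  simp only [heval, mul_eq_zero, hc', false_or, sub_eq_zero]

theorem two_mul_sub_one_eq_mul_of_root (ha : c * a ^ 2 - c * a + 1 = 0) :
    2 * a - 1 = (1 - a) * (c * a ^ 2 - 1) := by
  linear_combination a * ha

theorem mul_sq_sub_one_ne_zero_of_root (ha : c * a ^ 2 - c * a + 1 = 0)
    (h : 2 * a - 1 ≠ 0) : c * a ^ 2 - 1 ≠ 0 := by
  intro hden
  rw [two_mul_sub_one_eq_mul_of_root ha, hden, mul_zero] at h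
  exact h rfl

theorem div_eq_one_sub_of_root (ha : c * a ^ 2 - c * a + 1 = 0) (h : 2 * a - 1 ≠ 0) :
    (2 * a - 1) / (c * a ^ 2 - 1) = 1 - a := by
  rw [div_eq_iff (mul_sq_sub_one_ne_zero_of_root ha h), two_mul_sub_one_eq_mul_of_root ha]

variable {s : K}

theorem quadratic_formula_root (hc : (2 : K) * c ≠ 0) (hs : s ^ 2 = c * (c - 4)) :
    c * ((c + s) / (2 * c)) ^ 2 - c * ((c + s) / (2 * c)) + 1 = 0 := by
  have h2 : (2 : K) ≠ 0 := left_ne_zero_of_mul hc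
  have hc0 : c ≠ 0 := right_ne_zero_of_mul hc
  field_simp
  linear_combination hs

theorem two_mul_quadratic_formula_sub_one (hc : (2 : K) * c ≠ 0) :
    2 * ((c + s) / (2 * c)) - 1 = s / c := by
  have h2 : (2 : K) ≠ 0 := left_ne_zero_of_mul hc
  have hc0 : c ≠ 0 := right_ne_zero_of_mul hc
  field_simp
  ring

end

/-- Let `c ∈ ℚ \ {0,4}`, let `s` be a square root of `c(c−4)` in `ℚ̄` and
`α = (c + s)/(2c)`. Then `α` and `1 − α` are exactly the critical points of
`ψ_c(x) = (2x − 1)/(cx² − 1)`, they are distinct, and they form a 2-cycle: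
`ψ_c(α) = 1 − α` and `ψ_c(1 − α) = α`. -/
theorem stmt_4 (c : ℚ) (hc0 : c ≠ 0) (hc4 : c ≠ 4)
    (s : AlgebraicClosure ℚ) (hs : s^2 = (c : AlgebraicClosure ℚ) * ((c : AlgebraicClosure ℚ) - 4))
    (α : AlgebraicClosure ℚ) (hα : α = ((c : AlgebraicClosure ℚ) + s)/(2*c)) :
    (∀ x : AlgebraicClosure ℚ,
      (critNum (2*X - 1) (C (c : AlgebraicClosure ℚ) * X^2 - 1)).eval x = 0 ↔
        x = α ∨ x = 1 - α) ∧
    α ≠ 1 - α ∧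
    (c : AlgebraicClosure ℚ) * α^2 - 1 ≠ 0 ∧
    (2*α - 1)/((c : AlgebraicClosure ℚ) * α^2 - 1) = 1 - α ∧
    (c : AlgebraicClosure ℚ) * (1-α)^2 - 1 ≠ 0 ∧
    (2*(1-α) - 1)/((c : AlgebraicClosure ℚ) * (1-α)^2 - 1) = α := by
  have h2c : (2 : AlgebraicClosure ℚ) * c ≠ 0 :=
    mul_ne_zero two_ne_zero (by exact_mod_cast hc0)
  have hs0 : s ≠ 0 := by
    rintro rfl
    have : (c * (c - 4) : AlgebraicClosure ℚ) ≠ 0 :=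
      mul_ne_zero (by exact_mod_cast hc0) (sub_ne_zero.mpr (by exact_mod_cast hc4))
    exact this (by rw [← hs]; ring)
  have hroot := hα ▸ quadratic_formula_root h2c hs
  have hhalf : 2 * α - 1 ≠ 0 := by
    rw [hα, two_mul_quadratic_formula_sub_one h2c]
    exact div_ne_zero hs0 (right_ne_zero_of_mul h2c)
  have hhalf' : 2 * (1 - α) - 1 ≠ 0 := by
    rwa [show 2 * (1 - α) - 1 = -(2 * α - 1) by ring, neg_ne_zero]
  have hroot' := quadratic_root_one_sub hroot
  refine ⟨eval_critNum_eq_zero_iff h2c hroot, fun h => hhalf (by linear_combination h),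
    mul_sq_sub_one_ne_zero_of_root hroot hhalf, div_eq_one_sub_of_root hroot hhalf,
    mul_sq_sub_one_ne_zero_of_root hroot' hhalf', ?_⟩
  rw [div_eq_one_sub_of_root hroot' hhalf', sub_sub_cancel]
end

section
/- Let c ∈ ℚ \ {0, 4} and α = (c + √(c(c−4)))/(2c). Then the conjugation of ψ_c(x) = (2x − 1)/(cx² − 1) by the linear fractional map σ sending the critical 2-cycle {α, 1−α} to {0, ∞} yields the map x ↦ (cα − 1)/x², i.e., there is σ ∈ PGL₂(ℚ(α)) with σ(0) = α, σ(∞) = 1 − α, such that σ⁻¹ ∘ ψ_c ∘ σ = (cα − 1)/x². -/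
noncomputable section
open scoped Classical

/-- The Möbius transformation `x ↦ (ax + b)/(ex + d)` (with `ad − be ≠ 0`) as a map of
`ℙ¹(K) = K ∪ {∞}`, with `∞` encoded as `none`. -/
def mobius {K : Type*} [Field K] (a b e d : K) : Option K → Option K
  | none => if e = 0 then none else some (a/e)
  | some x => if e*x + d = 0 then none else some ((a*x + b)/(e*x + d))

/-- The map `ψ_c(x) = (2x − 1)/(cx² − 1)` on `ℙ¹(K)`; `ψ_c(∞) = 0`. -/
def psiOpt {K : Type*} [Field K] (c : K) : Option K → Option K
  | none => some 0
  | some x => if c*x^2 - 1 = 0 then none else some ((2*x - 1)/(c*x^2 - 1))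

/-- The map `x ↦ a/x²` on `ℙ¹(K)`: `0 ↦ ∞` and `∞ ↦ 0`. -/
def invSq {K : Type*} [Field K] (a : K) : Option K → Option K
  | none => some 0
  | some x => if x = 0 then none else some (a/x^2)

/-! The conjugating map is `σ(x) = ((α - 1)x + α)/(1 - x)`, so `σ(0) = α`, `σ(∞) = 1 - α` and
`σ(1) = ∞`. Modulo `cα² - cα + 1 = 0` one has `2σ(x) - 1 = (2α - 1)(1 + x)/(1 - x)` and
`cσ(x)² - 1 = (c - cα - 2)(x² - (cα - 1))/(1 - x)²`, so the poles of `ψ_c ∘ σ` and of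
`σ ∘ ((cα - 1)/x²)` both sit at `x² = cα - 1`, and elsewhere the two sides agree by a polynomial
identity. `σ` is invertible because its determinant `2α - 1` satisfies `c(2α - 1)² = c - 4`. -/

section Conjugacy

variable {K : Type*} [Field K] {c α : K}

theorem mobius_some_of_ne {a b e d x : K} (h : e*x + d ≠ 0) :
    mobius a b e d (some x) = some ((a*x + b)/(e*x + d)) := if_neg h

theorem mobius_some_of_eq {a b e d x : K} (h : e*x + d = 0) :
    mobius a b e d (some x) = none := if_pos h

theorem psiOpt_some_of_ne {x : K} (h : c*x^2 - 1 ≠ 0) :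
    psiOpt c (some x) = some ((2*x - 1)/(c*x^2 - 1)) := if_neg h

theorem psiOpt_some_of_eq {x : K} (h : c*x^2 - 1 = 0) : psiOpt c (some x) = none := if_pos h

theorem invSq_some_of_ne {a x : K} (h : x ≠ 0) : invSq a (some x) = some (a/x^2) := if_neg h

/-- Given `hα`, `c*α - 2` and `c - c*α - 2` are the values of `c*x^2 - 1` at `α` and `1 - α`. -/
theorem mul_sub_two_mul_sub_two (hα : c*α^2 - c*α + 1 = 0) :
    (c*α - 2) * (c - c*α - 2) = 4 - c := by
  linear_combination (-c) * hα

theorem mul_sub_two_ne_zero (hα : c*α^2 - c*α + 1 = 0) (hc4 : c ≠ 4) :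
    c*α - 2 ≠ 0 ∧ c - c*α - 2 ≠ 0 :=
  mul_ne_zero_iff.mp (by rw [mul_sub_two_mul_sub_two hα]; exact sub_ne_zero.mpr hc4.symm)

theorem two_mul_sub_one_ne_zero (hα : c*α^2 - c*α + 1 = 0) (hc4 : c ≠ 4) : 2*α - 1 ≠ 0 :=
  fun h => hc4 (by linear_combination -(4 * hα) + c * (2*α - 1) * h)

theorem psiOpt_mobius_conj_some (hα : c*α^2 - c*α + 1 = 0) (hc4 : c ≠ 4) {x : K}
    (hx0 : x ≠ 0) (hx1 : x ≠ 1) :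
    psiOpt c (mobius (α-1) α (-1) 1 (some x)) =
      mobius (α-1) α (-1) 1 (some ((c*α - 1)/x^2)) := by
  obtain ⟨-, hβ⟩ := mul_sub_two_ne_zero hα hc4
  have hd : -x + 1 ≠ 0 := fun h => hx1 (by linear_combination -h)
  have hd' : -1*x + 1 ≠ 0 := by rwa [neg_one_mul]
  set u := ((α-1)*x + α)/(-1*x + 1) with hu
  set y := (c*α - 1)/x^2 with hy
  have hpole_u : c*u^2 - 1 = (c - c*α - 2) * (x^2 - (c*α - 1)) / (-1*x + 1)^2 := by
    rw [hu]; field_simp; linear_combination ((x+1)^2 - c) * hα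
  have hpole_y : -1*y + 1 = (x^2 - (c*α - 1)) / x^2 := by
    rw [hy]; field_simp; ring
  rw [mobius_some_of_ne hd']
  by_cases hxA : x^2 - (c*α - 1) = 0
  · rw [psiOpt_some_of_eq (by rw [hpole_u, hxA]; simp),
      mobius_some_of_eq (by rw [hpole_y, hxA]; simp)]
  · have hu0 : c*u^2 - 1 ≠ 0 := by
      rw [hpole_u]; exact div_ne_zero (mul_ne_zero hβ hxA) (pow_ne_zero 2 hd')
    have hy0 : -1*y + 1 ≠ 0 := by rw [hpole_y]; exact div_ne_zero hxA (pow_ne_zero 2 hx0)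
    rw [psiOpt_some_of_ne hu0, mobius_some_of_ne hy0, Option.some.injEq, div_eq_div_iff hu0 hy0,
      hpole_u, hpole_y, hu, hy]
    field_simp
    linear_combination (x^2 - (c*α-1)) * (x^2 - c + c*α + 1) * hα

theorem mobius_conj_some_zero (α : K) : mobius (α-1) α (-1) 1 (some 0) = some α := by
  simp [mobius]

theorem mobius_conj_none (α : K) : mobius (α-1) α (-1) 1 none = some (1 - α) := by
  simp only [mobius, if_neg (neg_ne_zero.mpr one_ne_zero), div_neg, div_one, neg_sub]

theorem psiOpt_comp_mobius_conj (hα : c*α^2 - c*α + 1 = 0) (hc4 : c ≠ 4) (P : Option K) :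
    psiOpt c (mobius (α-1) α (-1) 1 P) = mobius (α-1) α (-1) 1 (invSq (c*α - 1) P) := by
  obtain ⟨hγ, hβ⟩ := mul_sub_two_ne_zero hα hc4
  rcases P with _ | x
  · have hpole : c*(1 - α)^2 - 1 ≠ 0 := fun h => hβ (by linear_combination h - hα)
    rw [mobius_conj_none, psiOpt_some_of_ne hpole, invSq, mobius_conj_some_zero,
      Option.some.injEq, div_eq_iff hpole]
    linear_combination (1 - α) * hα
  by_cases hx0 : x = 0
  · have hpole : c*α^2 - 1 ≠ 0 := fun h => hγ (by linear_combination h - hα)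
    rw [hx0, invSq, if_pos rfl, mobius_conj_some_zero, psiOpt_some_of_ne hpole, mobius_conj_none,
      Option.some.injEq, div_eq_iff hpole]
    linear_combination α * hα
  rw [invSq_some_of_ne hx0]
  by_cases hx1 : x = 1
  · have hd : -1*((c*α - 1)/x^2) + 1 ≠ 0 :=
      fun h => hγ (by rw [hx1] at h; linear_combination -h)
    rw [mobius_some_of_eq (by rw [hx1]; ring), mobius_some_of_ne hd, psiOpt, Option.some.injEq,
      eq_comm, div_eq_zero_iff, hx1]
    left; linear_combination hα
  exact psiOpt_mobius_conj_some hα hc4 hx0 hx1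

end Conjugacy

theorem quadratic_of_eq_div {K : Type*} [Field K] [NeZero (2 : K)] {c s α : K} (hc : c ≠ 0)
    (hs : s^2 = c*(c - 4)) (hα : α = (c + s)/(2*c)) : c*α^2 - c*α + 1 = 0 := by
  have h2α : 2*c*α = c + s := by rw [hα]; field_simp
  have : (2*c)^2 * (c*α^2 - c*α + 1) = 0 := by
    linear_combination (c*(2*c*α) + c*(c + s) - 2*c^2) * h2α + c * hs
  exact (mul_eq_zero.mp this).resolve_left (pow_ne_zero 2 (mul_ne_zero two_ne_zero hc))

/-- Let `c ∈ ℚ \ {0,4}` and `α = (c + √(c(c−4)))/(2c)`. There is a Möbius transformation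
`σ` with `σ(0) = α` and `σ(∞) = 1 − α` conjugating `ψ_c(x) = (2x−1)/(cx²−1)` to
`x ↦ (cα − 1)/x²`, i.e. `ψ_c ∘ σ = σ ∘ ((cα−1)/x²)`. -/
theorem stmt_5 (c : ℚ) (hc0 : c ≠ 0) (hc4 : c ≠ 4)
    (s : AlgebraicClosure ℚ) (hs : s^2 = (c : AlgebraicClosure ℚ) * ((c : AlgebraicClosure ℚ) - 4))
    (α : AlgebraicClosure ℚ) (hα : α = ((c : AlgebraicClosure ℚ) + s)/(2*c)) :
    ∃ a b e d : AlgebraicClosure ℚ, a*d - b*e ≠ 0 ∧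
      mobius a b e d (some 0) = some α ∧
      mobius a b e d none = some (1 - α) ∧
      ∀ P : Option (AlgebraicClosure ℚ),
        psiOpt (c : AlgebraicClosure ℚ) (mobius a b e d P) =
          mobius a b e d (invSq ((c : AlgebraicClosure ℚ) * α - 1) P) := by
  have hquad := quadratic_of_eq_div (by exact_mod_cast hc0) hs hα
  have hc4' : (c : AlgebraicClosure ℚ) ≠ 4 := by exact_mod_cast hc4
  have hdet := two_mul_sub_one_ne_zero hquad hc4'
  exact ⟨α - 1, α, -1, 1, fun h => hdet (by linear_combination h), mobius_conj_some_zero α,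
    mobius_conj_none α, psiOpt_comp_mobius_conj hquad hc4'⟩

end
end

section
/- Let c ∈ ℚ \ {0, 4} and α = (c + √(c(c−4)))/(2c). If α ∈ ℚ and cα − 1 has a rational cube root, then there exists q ∈ ℚ \ {0, 1, −1} such that c = (q³+1)²/q³. -/
/-- Let `c ∈ ℚ \ {0,4}` and `α = (c + √(c(c−4)))/(2c)`. If `α` is rational (i.e. the
square root `s` of `c(c−4)` lies in `ℚ`) and `cα − 1` has a rational cube root, then
`c = (q³+1)²/q³` for some `q ∈ ℚ \ {0, ±1}`. -/
theorem stmt_8 (c : ℚ) (hc0 : c ≠ 0) (hc4 : c ≠ 4)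
    (s : ℚ) (hs : s^2 = c*(c - 4))
    (α : ℚ) (hα : α = (c + s)/(2*c))
    (hcube : ∃ u : ℚ, u^3 = c*α - 1) :
    ∃ q : ℚ, q ≠ 0 ∧ q ≠ 1 ∧ q ≠ -1 ∧ c = (q^3 + 1)^2/q^3 := by
  obtain ⟨u, hu⟩ := hcube
  have hca : c * α = (c + s) / 2 := by
    rw [hα]; field_simp
  have hsu : s = 2 * u^3 + 2 - c := by
    rw [hca] at hu; linarith
  have key : c * u^3 = (u^3 + 1)^2 := by
    rw [hsu] at hs; nlinarith [hs]
  have ht : u^3 ≠ 0 := by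
    intro h; rw [h] at key; norm_num at key
  have hu0 : u ≠ 0 := fun h => ht (by rw [h]; ring)
  have hu1 : u ≠ 1 := by
    intro h; rw [h] at key; norm_num at key; exact hc4 (by linarith)
  have hum1 : u ≠ -1 := by
    intro h; rw [h] at key; norm_num at key; exact hc0 key
  exact ⟨u, hu0, hu1, hum1, by field_simp at key ⊢; linarith [key]⟩
end

section
/- Let c ∈ ℚ \ {0, 4}, let α be a root of cX² − cX + 1 = 0 with α ∉ ℚ, and suppose cα − 1 = (p + qα)³ for some p, q ∈ ℚ with q ≠ 0. Then p ∉ {−1, 0, 1/2, 1/3}, q = (1 − p − 2p²)/p, and c = (4p³ − 3p + 1)/p³. -/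
/-- Let `c ∈ ℚ \ {0,4}` and let `α ∉ ℚ` be a root of `cX² − cX + 1` in `ℚ̄`. If
`cα − 1 = (p + qα)³` with `p, q ∈ ℚ`, `q ≠ 0`, then `p ∉ {−1, 0, 1/2, 1/3}`,
`q = (1 − p − 2p²)/p` and `c = (4p³ − 3p + 1)/p³`. -/
theorem stmt_9 (c : ℚ) (hc0 : c ≠ 0) (hc4 : c ≠ 4)
    (α : AlgebraicClosure ℚ)
    (hroot : (c : AlgebraicClosure ℚ) * α^2 - (c : AlgebraicClosure ℚ) * α + 1 = 0)
    (hirr : α ∉ Set.range ((↑) : ℚ → AlgebraicClosure ℚ))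
    (p q : ℚ) (hq : q ≠ 0)
    (hcube : ((p : AlgebraicClosure ℚ) + (q : AlgebraicClosure ℚ) * α)^3 =
      (c : AlgebraicClosure ℚ) * α - 1) :
    p ≠ -1 ∧ p ≠ 0 ∧ p ≠ 1/2 ∧ p ≠ 1/3 ∧
    q = (1 - p - 2*p^2)/p ∧ c = (4*p^3 - 3*p + 1)/p^3 := by
  have hcK : (c : AlgebraicClosure ℚ) ≠ 0 := Rat.cast_ne_zero.mpr hc0
  -- the linear relation in the basis {1, α}
  have hlin : (((c*p^3 - 3*p*q^2 - q^3 + c : ℚ)) : AlgebraicClosure ℚ)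
      + ((c*(3*p^2*q+3*p*q^2+q^3) - q^3 - c^2 : ℚ) : AlgebraicClosure ℚ) * α = 0 := by
    have h0 : (c : AlgebraicClosure ℚ) * ((((c*p^3 - 3*p*q^2 - q^3 + c : ℚ)) : AlgebraicClosure ℚ)
        + ((c*(3*p^2*q+3*p*q^2+q^3) - q^3 - c^2 : ℚ) : AlgebraicClosure ℚ) * α) = 0 := by
      push_cast
      linear_combination (c : AlgebraicClosure ℚ)^2 * hcube
        - ((3*(p : AlgebraicClosure ℚ)*q^2*c + (q : AlgebraicClosure ℚ)^3*c) + ((q : AlgebraicClosure ℚ)^3*c)*α) * hroot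
    rcases mul_eq_zero.mp h0 with h | h
    · exact absurd h hcK
    · exact h
  -- coefficient of α vanishes, by irrationality of α
  have hE2 : c*(3*p^2*q+3*p*q^2+q^3) - q^3 - c^2 = 0 := by
    by_contra hB
    apply hirr
    refine ⟨-(c*p^3 - 3*p*q^2 - q^3 + c)/(c*(3*p^2*q+3*p*q^2+q^3) - q^3 - c^2), ?_⟩
    have hBK : ((c*(3*p^2*q+3*p*q^2+q^3) - q^3 - c^2 : ℚ) : AlgebraicClosure ℚ) ≠ 0 :=
      Rat.cast_ne_zero.mpr hB
    rw [Rat.cast_div, div_eq_iff hBK]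
    push_cast at hlin ⊢
    linear_combination -hlin
  -- constant coefficient vanishes
  have hE1 : c*p^3 - 3*p*q^2 - q^3 + c = 0 := by
    have : ((c*p^3 - 3*p*q^2 - q^3 + c : ℚ) : AlgebraicClosure ℚ) = 0 := by
      rw [Rat.cast_eq_zero.mpr hE2] at hlin
      simpa using hlin
    exact_mod_cast this
  -- now pure rational algebra
  have hp0 : p ≠ 0 := by
    rintro rfl
    have hcq : c = q^3 := by linarith [hE1]
    have : q^3 = 0 := by nlinarith [hE1, hE2]
    exact hq (pow_eq_zero_iff (n := 3) (by norm_num) |>.mp this)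
  have hpm1 : p ≠ -1 := by
    rintro rfl
    have hq3 : q = 3 := by
      have h : q^2 * (3 - q) = 0 := by linear_combination hE1
      rcases mul_eq_zero.mp h with h | h
      · exact absurd (pow_eq_zero_iff (n := 2) (by norm_num) |>.mp h) hq
      · linarith
    subst hq3
    nlinarith [sq_nonneg (2*c - 9), hE2]
  -- the resultant factorization : q^3 * D * H = 0
  have hDH : q^3 * (p*q + 2*p^2 + p - 1) *
      (-(p^2*q^2) + (-p + p^2 - 4*p^3)*q + (-1 - p - 3*p^2 + 2*p^3 - 4*p^4)) = 0 := by
    linear_combination ((c*p^3 - 3*p*q^2 - q^3 + c) - 2*c*(p^3+1)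
        + (3*p^2*q+3*p*q^2+q^3)*(p^3+1)) * hE1 - (p^3+1)^2 * hE2
  have hH : -(p^2*q^2) + (-p + p^2 - 4*p^3)*q + (-1 - p - 3*p^2 + 2*p^3 - 4*p^4) ≠ 0 := by
    intro hH0
    have hsq : (2*p^2*q + p*(1 - p + 4*p^2))^2 + 3*(p*(p+1))^2 = 0 := by
      linear_combination (-4*p^2) * hH0
    have hpp : p*(p+1) ≠ 0 := mul_ne_zero hp0 (by
      intro h; exact hpm1 (by linarith))
    nlinarith [sq_nonneg (2*p^2*q + p*(1 - p + 4*p^2)), sq_pos_of_ne_zero hpp]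
  have hD : p*q + 2*p^2 + p - 1 = 0 := by
    rcases mul_eq_zero.mp hDH with h | h
    · rcases mul_eq_zero.mp h with h | h
      · exact absurd (pow_eq_zero_iff (n := 3) (by norm_num) |>.mp h) hq
      · exact h
    · exact absurd h hH
  have hp12 : p ≠ 1/2 := by
    rintro rfl
    apply hq
    linarith [hD]
  have hp13 : p ≠ 1/3 := by
    rintro rfl
    apply hc4
    have hq43 : q = 4/3 := by linarith [hD]
    subst hq43
    linarith [hE1]
  have hqf : q = (1 - p - 2*p^2)/p := by
    field_simp
    linear_combination hD
  have hp31 : p^3 + 1 ≠ 0 := by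
    intro h
    have : p = -1 := by nlinarith [sq_nonneg (p - 1), sq_nonneg (p + 1)]
    exact hpm1 this
  have hcf : c = (4*p^3 - 3*p + 1)/p^3 := by
    have key : (p^3 + 1) * (c*p^3 - (4*p^3 - 3*p + 1)) = 0 := by
      linear_combination p^3 * hE1 + (p^2*q^2 + p^3*q - p^2*q + p*q
        - 2*p^4 + p^3 - 2*p + 1) * hD
    have h2 : c*p^3 - (4*p^3 - 3*p + 1) = 0 := by
      rcases mul_eq_zero.mp key with h | h
      · exact absurd h hp31
      · exact h
    have hp3 : p^3 ≠ 0 := pow_ne_zero _ hp0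
    field_simp
    linarith [h2]
  exact ⟨hpm1, hp0, hp12, hp13, hqf, hcf⟩
end

section
/- Let p ∈ ℚ \ {−1, 0, 1/2, 1/3} and c = (4p³ − 3p + 1)/p³. Then p⁶ · c(c − 4) = (p+1)(1 − 3p)(2p − 1)². Consequently, if (p+1)(1 − 3p) is not a square in ℚ, then c(c−4) is not a square in ℚ, so the roots of cX² − cX + 1 are irrational; moreover, setting q = (1 − p − 2p²)/p and letting α be such a root, one has (p + qα)³ = cα − 1. -/
/-! `p + qα` is a cube root of `cα − 1` in `ℚ(α)`: expanding the cube and reducing with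
`cα² = cα − 1` leaves a linear expression in `α` whose coefficients agree with those of
`cα − 1` because of the choice of `c` and `q`. The discriminant `c(c − 4)` of `cX² − cX + 1`
differs from `(p + 1)(1 − 3p)` by the nonzero square `((2p − 1)/p³)²`, so it is not a
rational square, and hence the quadratic has no rational root. -/

section

variable {K : Type*} [Field K]

theorem pow_six_mul_discrim_eq {p : K} (hp : p ≠ 0) :
    p^6 * ((4*p^3 - 3*p + 1)/p^3 * ((4*p^3 - 3*p + 1)/p^3 - 4)) =
      (p + 1)*(1 - 3*p)*(2*p - 1)^2 := by
  field_simp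
  ring

theorem exists_sq_of_sq_mul_eq_mul_sq {a b t e : K} (he : e ≠ 0) (h : t^2 * a = b * e^2) :
    (∃ s, s^2 = a) → ∃ s, s^2 = b := by
  rintro ⟨s, rfl⟩
  refine ⟨t * s / e, ?_⟩
  field_simp
  linear_combination h

theorem add_mul_pow_three_eq_of_root {p α : K} (hp : p ≠ 0)
    (hα : (4*p^3 - 3*p + 1)/p^3 * α^2 - (4*p^3 - 3*p + 1)/p^3 * α + 1 = 0) :
    (p + (1 - p - 2*p^2)/p * α)^3 = (4*p^3 - 3*p + 1)/p^3 * α - 1 := by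
  field_simp at hα ⊢
  linear_combination (-(2*p - 1)*(p + 1)^2*α + (p^3 + 1)) * hα

end

theorem sq_mul_two_mul_sub_one_of_root {R : Type*} [CommRing R] {c r : R}
    (h : c*r^2 - c*r + 1 = 0) : (c*(2*r - 1))^2 = c*(c - 4) := by
  linear_combination (4*c) * h

theorem stmt_10_general (p : ℚ) (hp0 : p ≠ 0) (hp2 : p ≠ 1/2)
    (c : ℚ) (hc : c = (4*p^3 - 3*p + 1)/p^3)
    (q : ℚ) (hq : q = (1 - p - 2*p^2)/p) :
    p^6 * (c*(c - 4)) = (p + 1)*(1 - 3*p)*(2*p - 1)^2 ∧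
    ((¬ ∃ s : ℚ, s^2 = (p + 1)*(1 - 3*p)) →
      (¬ ∃ s : ℚ, s^2 = c*(c - 4)) ∧
      ∀ α : AlgebraicClosure ℚ,
        (c : AlgebraicClosure ℚ) * α^2 - (c : AlgebraicClosure ℚ) * α + 1 = 0 →
          α ∉ Set.range ((↑) : ℚ → AlgebraicClosure ℚ) ∧
          ((p : AlgebraicClosure ℚ) + (q : AlgebraicClosure ℚ) * α)^3 =
            (c : AlgebraicClosure ℚ) * α - 1) := by
  have hdiscrim : p^6 * (c*(c - 4)) = (p + 1)*(1 - 3*p)*(2*p - 1)^2 := by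
    rw [hc]
    exact pow_six_mul_discrim_eq hp0
  have h2p : 2*p - 1 ≠ 0 := fun h => hp2 (by linarith)
  refine ⟨hdiscrim, fun hns => ?_⟩
  have hns' : ¬ ∃ s : ℚ, s^2 = c*(c - 4) := fun hs =>
    hns (exists_sq_of_sq_mul_eq_mul_sq (t := p^3) h2p (by rw [← hdiscrim]; ring) hs)
  refine ⟨hns', fun α hα => ⟨?_, ?_⟩⟩
  · rintro ⟨r, rfl⟩
    have hr : c*r^2 - c*r + 1 = 0 := by exact_mod_cast hα
    exact hns' ⟨_, sq_mul_two_mul_sub_one_of_root hr⟩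
  · subst hc hq
    push_cast at hα ⊢
    exact add_mul_pow_three_eq_of_root (by exact_mod_cast hp0) hα

/-- Let `p ∈ ℚ \ {−1, 0, 1/2, 1/3}` and `c = (4p³ − 3p + 1)/p³`. Then
`p⁶·c(c−4) = (p+1)(1−3p)(2p−1)²`; consequently, if `(p+1)(1−3p)` is not a rational
square, then `c(c−4)` is not a rational square, every root `α` of `cX² − cX + 1` in `ℚ̄`
is irrational, and with `q = (1 − p − 2p²)/p` one has `(p + qα)³ = cα − 1`. -/
theorem stmt_10 (p : ℚ) (hpm1 : p ≠ -1) (hp0 : p ≠ 0) (hp2 : p ≠ 1/2) (hp3 : p ≠ 1/3)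
    (c : ℚ) (hc : c = (4*p^3 - 3*p + 1)/p^3)
    (q : ℚ) (hq : q = (1 - p - 2*p^2)/p) :
    p^6 * (c*(c - 4)) = (p + 1)*(1 - 3*p)*(2*p - 1)^2 ∧
    ((¬ ∃ s : ℚ, s^2 = (p + 1)*(1 - 3*p)) →
      (¬ ∃ s : ℚ, s^2 = c*(c - 4)) ∧
      ∀ α : AlgebraicClosure ℚ,
        (c : AlgebraicClosure ℚ) * α^2 - (c : AlgebraicClosure ℚ) * α + 1 = 0 →
          α ∉ Set.range ((↑) : ℚ → AlgebraicClosure ℚ) ∧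
          ((p : AlgebraicClosure ℚ) + (q : AlgebraicClosure ℚ) * α)^3 =
            (c : AlgebraicClosure ℚ) * α - 1) :=
  stmt_10_general p hp0 hp2 c hc q hq
end

section
/- The plane curve over ℚ defined by p²q² + 4p³q + 4p⁴ − p²q − 2p³ + 3p² + pq + p + 1 = 0 has no rational point with p ≠ −1; equivalently, every rational point (p, q) on this curve satisfies p = −1. -/
/-- Every rational point `(p, q)` on the plane curve
`p²q² + 4p³q + 4p⁴ − p²q − 2p³ + 3p² + pq + p + 1 = 0` satisfies `p = −1`. -/
theorem stmt_11 (p q : ℚ)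
    (h : p^2*q^2 + 4*p^3*q + 4*p^4 - p^2*q - 2*p^3 + 3*p^2 + p*q + p + 1 = 0) :
    p = -1 := by
  have key : (2*p^2*q + 4*p^3 - p^2 + p)^2 + 3*(p*(p+1))^2
      = 4*p^2*(p^2*q^2 + 4*p^3*q + 4*p^4 - p^2*q - 2*p^3 + 3*p^2 + p*q + p + 1) := by
    ring
  rw [h, mul_zero] at key
  have h2 : p*(p+1) = 0 := by
    nlinarith [sq_nonneg (2*p^2*q + 4*p^3 - p^2 + p), sq_nonneg (p*(p+1))]
  rcases mul_eq_zero.mp h2 with h0 | h1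
  · subst h0; simp at h
  · linarith
end

section
/- For every rational number c ∉ {0, 1, −1}, the coordinates (σ₁, σ₂) of the conjugacy class of φ_c(x) = c(x−1)/x² under Milnor's isomorphism M₂ ≅ 𝔸² are (c − 6, 12 − 2c); in particular σ₂ = −2σ₁, and the value of −2r³ − r²s + r² + 8rs + 4s² − 12r − 12s + 36 at (r, s) = (c − 6, 12 − 2c) equals c², which is nonzero. -/
open Polynomial

/-- For `c ∈ ℚ \ {0, ±1}`, the fixed points of `φ_c(x) = c(x−1)/x²` are the roots of
`x³ − cx + c`, the multiplier at a fixed point `r` is `φ_c'(r) = c(2 − r)/r³`, and the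
elementary symmetric functions of the three multipliers are `(σ₁, σ₂) = (c − 6, 12 − 2c)`;
in particular `σ₂ = −2σ₁`, and the symmetry-locus polynomial
`−2r³ − r²s + r² + 8rs + 4s² − 12r − 12s + 36` evaluates at `(c − 6, 12 − 2c)` to the
nonzero value `c²`. -/
theorem stmt_13 (c : ℚ) (hc0 : c ≠ 0) (hc1 : c ≠ 1) (hcm1 : c ≠ -1)
    (r₁ r₂ r₃ : AlgebraicClosure ℚ)
    (hfactor : (X^3 - C (c : AlgebraicClosure ℚ) * X + C (c : AlgebraicClosure ℚ) :
        (AlgebraicClosure ℚ)[X]) = (X - C r₁) * (X - C r₂) * (X - C r₃))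
    (l₁ l₂ l₃ : AlgebraicClosure ℚ)
    (hl₁ : l₁ = (c : AlgebraicClosure ℚ)*(2 - r₁)/r₁^3)
    (hl₂ : l₂ = (c : AlgebraicClosure ℚ)*(2 - r₂)/r₂^3)
    (hl₃ : l₃ = (c : AlgebraicClosure ℚ)*(2 - r₃)/r₃^3) :
    l₁ + l₂ + l₃ = ((c : AlgebraicClosure ℚ) - 6) ∧
    l₁*l₂ + l₁*l₃ + l₂*l₃ = (12 - 2*(c : AlgebraicClosure ℚ)) ∧
    (12 - 2*c : ℚ) = -2*(c - 6) ∧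
    -2*(c - 6)^3 - (c - 6)^2*(12 - 2*c) + (c - 6)^2 + 8*(c - 6)*(12 - 2*c)
      + 4*(12 - 2*c)^2 - 12*(c - 6) - 12*(12 - 2*c) + 36 = c^2 ∧
    (c : ℚ)^2 ≠ 0 := by
  have hcK : (c : AlgebraicClosure ℚ) ≠ 0 := by exact_mod_cast hc0
  have ev : ∀ t : AlgebraicClosure ℚ, t^3 - (c : AlgebraicClosure ℚ) * t + (c : AlgebraicClosure ℚ) = (t - r₁) * (t - r₂) * (t - r₃) := by
    intro t
    have := congrArg (eval t) hfactor
    simpa using this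
  -- Vieta
  have h0 := ev 0
  have h1 := ev 1
  have h2 := ev 2
  have hm1 := ev (-1)
  have hs1 : r₁ + r₂ + r₃ = 0 := by
    linear_combination -h0 + (1/2 : AlgebraicClosure ℚ) * h1 + (1/2 : AlgebraicClosure ℚ) * hm1
  have hs2 : r₁*r₂ + r₁*r₃ + r₂*r₃ = -(c : AlgebraicClosure ℚ) := by
    linear_combination (-1/2 : AlgebraicClosure ℚ) * h1 + (1/2 : AlgebraicClosure ℚ) * hm1
  have hs3 : r₁*r₂*r₃ = -(c : AlgebraicClosure ℚ) := by
    linear_combination h0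
  have ha : (r₁ - 1) * (r₂ - 1) * (r₃ - 1) = -1 := by
    linear_combination hs3 - hs2 + hs1
  -- cubic relations
  have hr1 : r₁^3 = (c : AlgebraicClosure ℚ)*r₁ - (c : AlgebraicClosure ℚ) := by have := ev r₁; linear_combination this
  have hr2 : r₂^3 = (c : AlgebraicClosure ℚ)*r₂ - (c : AlgebraicClosure ℚ) := by have := ev r₂; linear_combination this
  have hr3 : r₃^3 = (c : AlgebraicClosure ℚ)*r₃ - (c : AlgebraicClosure ℚ) := by have := ev r₃; linear_combination this
  -- roots nonzero
  have hr10 : r₁ ≠ 0 := fun h => hcK (by rw [h] at hr1; linear_combination hr1)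
  have hr20 : r₂ ≠ 0 := fun h => hcK (by rw [h] at hr2; linear_combination hr2)
  have hr30 : r₃ ≠ 0 := fun h => hcK (by rw [h] at hr3; linear_combination hr3)
  -- multipliers as polynomials in the roots
  have key₁ : l₁ = -((2 - r₁) * ((r₂ - 1) * (r₃ - 1))) := by
    rw [hl₁, div_eq_iff (pow_ne_zero 3 hr10)]
    linear_combination ((2 - r₁) * ((r₂ - 1) * (r₃ - 1))) * hr1 + (c : AlgebraicClosure ℚ) * (2 - r₁) * ha
  have key₂ : l₂ = -((2 - r₂) * ((r₁ - 1) * (r₃ - 1))) := by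
    rw [hl₂, div_eq_iff (pow_ne_zero 3 hr20)]
    linear_combination ((2 - r₂) * ((r₁ - 1) * (r₃ - 1))) * hr2 + (c : AlgebraicClosure ℚ) * (2 - r₂) * ha
  have key₃ : l₃ = -((2 - r₃) * ((r₁ - 1) * (r₂ - 1))) := by
    rw [hl₃, div_eq_iff (pow_ne_zero 3 hr30)]
    linear_combination ((2 - r₃) * ((r₁ - 1) * (r₂ - 1))) * hr3 + (c : AlgebraicClosure ℚ) * (2 - r₃) * ha
  have key₁₂ : l₁ * l₂ = -((2 - r₁) * (2 - r₂) * (r₃ - 1)) := by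
    rw [key₁, key₂]
    linear_combination ((2 - r₁) * (2 - r₂) * (r₃ - 1)) * ha
  have key₁₃ : l₁ * l₃ = -((2 - r₁) * (2 - r₃) * (r₂ - 1)) := by
    rw [key₁, key₃]
    linear_combination ((2 - r₁) * (2 - r₃) * (r₂ - 1)) * ha
  have key₂₃ : l₂ * l₃ = -((2 - r₂) * (2 - r₃) * (r₁ - 1)) := by
    rw [key₂, key₃]
    linear_combination ((2 - r₂) * (2 - r₃) * (r₁ - 1)) * ha
  refine ⟨?_, ?_, by ring, by ring, pow_ne_zero 2 hc0⟩
  · rw [key₁, key₂, key₃]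
    linear_combination 5 * hs1 - 4 * hs2 + 3 * hs3
  · rw [key₁₂, key₁₃, key₂₃]
    linear_combination -8 * hs1 + 5 * hs2 - 3 * hs3
end

section
/- For every rational c ∉ {0, 4}, the coordinates (σ₁, σ₂) of the fixed-point multipliers of ψ_c(x) = (2x−1)/(cx²−1) are (−6, 12); in particular (σ₁, σ₂) satisfies the symmetry-locus equation −2r³ − r²s + r² + 8rs + 4s² − 12r − 12s + 36 = 0, so Aut(ψ_c) is nontrivial. -/
/-!
The finite fixed points of `ψ_c` are the roots of `c x³ − 3x + 1`, and at such a root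
`ψ_c'(r) = −2`, so all three multipliers equal `−2` and `(σ₁, σ₂) = (−6, 12)`.

For the automorphism, lift maps of `ℙ¹` to homogeneous polynomial maps of `K²`: a Möbius map
commutes with `ψ_c` on `ℙ¹` as soon as the lifts commute up to a nonzero scalar. For the order-3
Möbius map cycling the three fixed points this is a polynomial identity modulo `s² = 12c − 3c²`, where
`s = √Δ / 3` for the discriminant `Δ = 27c(4 − c)` of `c x³ − 3x + 1`.
-/

noncomputable section
open scoped Classical
open Polynomial

section FixedPoints

variable {K : Type*} [Field K]

lemma cubic_eq_zero_of_eq_C_mul_prod {c r₁ r₂ r₃ r : K}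
    (hfactor : (C c * X^3 - 3*X + 1 : K[X]) = C c * ((X - C r₁) * (X - C r₂) * (X - C r₃)))
    (hr : r = r₁ ∨ r = r₂ ∨ r = r₃) :
    c*r^3 - 3*r + 1 = 0 := by
  have h := congrArg (eval r) hfactor
  simp only [eval_mul, eval_sub, eval_add, eval_pow, eval_C, eval_X, eval_one, eval_ofNat] at h
  rcases hr with rfl | rfl | rfl <;> simpa using h

lemma multiplier_eq_neg_two {c r : K} (hc4 : c ≠ 4) (hr : c*r^3 - 3*r + 1 = 0) :
    (-2*c*r^2 + 2*c*r - 2)/(c*r^2 - 1)^2 = -2 := by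
  have hden : c*r^2 - 1 ≠ 0 := by
    intro h
    have hhalf : 2*r - 1 = 0 := by linear_combination r*h - hr
    exact hc4 (by linear_combination 4*h - c*(2*r + 1)*hhalf)
  rw [div_eq_iff (pow_ne_zero 2 hden)]
  linear_combination (2*c*r)*hr

end FixedPoints

section ProjectiveLine

variable {K : Type*} [Field K]

/-- `[X : Y] = X / Y`, with `[X : 0] = ∞ = none` (also for the junk vector `0`). -/
def projPoint (v : K × K) : Option K := if v.2 = 0 then none else some (v.1 / v.2)

lemma projPoint_smul {k : K} (hk : k ≠ 0) (v : K × K) : projPoint (k • v) = projPoint v := by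
  simp [projPoint, hk, mul_div_mul_left]

lemma exists_ne_zero_projPoint_eq (z : Option K) : ∃ v ≠ 0, projPoint v = z := by
  cases z with
  | none => exact ⟨(1, 0), by simp, by simp [projPoint]⟩
  | some x => exact ⟨(x, 1), by simp, by simp [projPoint]⟩

lemma comp_comm_of_lifts_comm {f g : Option K → Option K} {F G : K × K → K × K}
    (hf : ∀ v ≠ 0, f (projPoint v) = projPoint (F v))
    (hg : ∀ v ≠ 0, g (projPoint v) = projPoint (G v))
    (hF : ∀ v ≠ 0, F v ≠ 0) (hG : ∀ v ≠ 0, G v ≠ 0)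
    {k : K} (hFG : ∀ v, F (G v) = k • G (F v)) :
    f ∘ g = g ∘ f := by
  have hk : k ≠ 0 := by
    rintro rfl
    have h := hF _ (hG (1, 0) (by simp))
    rw [hFG, zero_smul] at h
    exact h rfl
  funext z
  obtain ⟨v, hv, rfl⟩ := exists_ne_zero_projPoint_eq z
  rw [Function.comp_apply, Function.comp_apply, hg v hv, hf _ (hG v hv), hFG,
    projPoint_smul hk, ← hg _ (hF v hv), ← hf v hv]

def mobiusLift (a b e d : K) (v : K × K) : K × K := (a*v.1 + b*v.2, e*v.1 + d*v.2)

def psiLift (c : K) (v : K × K) : K × K := (2*v.1*v.2 - v.2^2, c*v.1^2 - v.2^2)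

lemma mobius_projPoint (a b e d : K) {v : K × K} (hv : v ≠ 0) :
    mobius a b e d (projPoint v) = projPoint (mobiusLift a b e d v) := by
  obtain ⟨x, y⟩ := v
  by_cases hy : y = 0
  · subst hy
    have hx : x ≠ 0 := by simpa using hv
    by_cases he : e = 0 <;> simp [projPoint, mobius, mobiusLift, he, hx, mul_div_mul_right]
  · have hquot : e*(x/y) + d = (e*x + d*y)/y := by field_simp
    by_cases hden : e*x + d*y = 0
    · simp [projPoint, mobius, mobiusLift, hy, hquot, hden]
    · simp only [mobius, projPoint, mobiusLift, hy, hquot, hden, ↓reduceIte, div_eq_zero_iff,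
        or_self, Option.some.injEq]
      field_simp

lemma psiOpt_projPoint {c : K} (hc : c ≠ 0) {v : K × K} (hv : v ≠ 0) :
    psiOpt c (projPoint v) = projPoint (psiLift c v) := by
  obtain ⟨x, y⟩ := v
  by_cases hy : y = 0
  · subst hy
    have hx : x ≠ 0 := by simpa using hv
    simp [projPoint, psiOpt, psiLift, hc, hx]
  · have hquot : c*(x/y)^2 - 1 = (c*x^2 - y^2)/y^2 := by field_simp
    by_cases hden : c*x^2 - y^2 = 0
    · simp [projPoint, psiOpt, psiLift, hy, hquot, hden]
    · simp only [psiOpt, projPoint, psiLift, hy, hquot, hden, ↓reduceIte, div_eq_zero_iff,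
        pow_eq_zero_iff, ne_eq, OfNat.ofNat_ne_zero, not_false_eq_true, or_self, Option.some.injEq]
      field_simp

lemma mobiusLift_ne_zero {a b e d : K} (hdet : a*d - b*e ≠ 0) {v : K × K} (hv : v ≠ 0) :
    mobiusLift a b e d v ≠ 0 := by
  obtain ⟨x, y⟩ := v
  intro h
  obtain ⟨h₁, h₂⟩ : a*x + b*y = 0 ∧ e*x + d*y = 0 := Prod.mk_eq_zero.mp h
  have hx : (a*d - b*e)*x = 0 := by linear_combination d*h₁ - b*h₂
  have hy : (a*d - b*e)*y = 0 := by linear_combination a*h₂ - e*h₁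
  simp_all

lemma psiLift_ne_zero {c : K} (hc0 : c ≠ 0) (hc4 : c ≠ 4) {v : K × K} (hv : v ≠ 0) :
    psiLift c v ≠ 0 := by
  obtain ⟨x, y⟩ := v
  intro h
  obtain ⟨h₁, h₂⟩ : 2*x*y - y^2 = 0 ∧ c*x^2 - y^2 = 0 := Prod.mk_eq_zero.mp h
  have hy : y*(2*x - y) = 0 := by linear_combination h₁
  rcases mul_eq_zero.mp hy with hy | hy
  · subst hy
    have hx : c*x^2 = 0 := by linear_combination h₂
    simp_all
  · obtain rfl : y = 2*x := by linear_combination -hy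
    have hx : (c - 4)*x^2 = 0 := by linear_combination h₂
    simp_all [sub_eq_zero]

end ProjectiveLine

section Automorphism

variable {K : Type*} [Field K]

lemma psiLift_mobiusLift {c s : K} (hs : s^2 = 12*c - 3*c^2) (v : K × K) :
    psiLift c (mobiusLift (c*(s - c - 2)) (3*c - s) (c*(s - 3*c)) (2*c*(c - 1)) v) =
      (-(c*(s + c - 4))) •
        mobiusLift (c*(s - c - 2)) (3*c - s) (c*(s - 3*c)) (2*c*(c - 1)) (psiLift c v) := by
  obtain ⟨x, y⟩ := v
  ext <;> simp only [psiLift, mobiusLift, Prod.smul_mk, smul_eq_mul]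
  · linear_combination ((c - c^2)*y^2 + (2*c^2 - 2*c)*x*y)*hs
  · linear_combination ((c - c^2)*y^2 + (c^3 - c^2)*x^2)*hs

variable [IsAlgClosed K] [CharZero K]

lemma exists_sq_eq_and_ne (c : K) : ∃ s : K, s^2 = 12*c - 3*c^2 ∧ s ≠ c + 2 := by
  obtain ⟨s, hs⟩ := IsAlgClosed.exists_pow_nat_eq (12*c - 3*c^2) two_pos
  by_cases hsc : s = c + 2
  · refine ⟨-s, by linear_combination hs, fun hsc' => ?_⟩
    have hc : c = -2 := by linear_combination -(hsc + hsc')/2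
    have hs0 : s = 0 := by linear_combination hsc + hc
    have : (36 : K) = 0 := by linear_combination hs - s*hs0 - 3*(c - 6)*hc
    norm_num at this
  · exact ⟨s, hs, hsc⟩

theorem exists_mobius_ne_id_comm_psiOpt {c : K} (hc0 : c ≠ 0) (hc4 : c ≠ 4) :
    ∃ a b e d : K, a*d - b*e ≠ 0 ∧ mobius a b e d ≠ id ∧
      psiOpt c ∘ mobius a b e d = mobius a b e d ∘ psiOpt c := by
  obtain ⟨s, hs, hs_ne⟩ := exists_sq_eq_and_ne c
  have hsc : s - c - 2 ≠ 0 := fun h => hs_ne (by linear_combination h)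
  have hdet : c*(s - c - 2)*(2*c*(c - 1)) - (3*c - s)*(c*(s - 3*c)) ≠ 0 := by
    rw [show c*(s - c - 2)*(2*c*(c - 1)) - (3*c - s)*(c*(s - 3*c)) = 2*c^2*(c - 4)*(s - c - 2) by
      linear_combination c*hs]
    simp [hc0, hc4, sub_eq_zero, hsc]
  have he : c*(s - 3*c) ≠ 0 := by
    refine mul_ne_zero hc0 fun h => ?_
    have hc1 : 12*c*(c - 1) = 0 := by linear_combination hs - (s + 3*c)*h
    have hc1 : c = 1 := by simpa [hc0, sub_eq_zero] using hc1
    exact hsc (by linear_combination h + 2*hc1)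
  refine ⟨_, _, _, _, hdet, fun hid => ?_,
    comp_comm_of_lifts_comm (fun _ => psiOpt_projPoint hc0) (fun _ => mobius_projPoint _ _ _ _)
      (fun _ => psiLift_ne_zero hc0 hc4) (fun _ => mobiusLift_ne_zero hdet) (psiLift_mobiusLift hs)⟩
  simpa [mobius, he] using congrFun hid none

end Automorphism

/-- For `c ∈ ℚ \ {0,4}`, the fixed points of `ψ_c(x) = (2x−1)/(cx²−1)` are the roots of
`cx³ − 3x + 1`, the multiplier at a fixed point `r` is `ψ_c'(r)`, and the elementary
symmetric functions of the three multipliers are `(σ₁, σ₂) = (−6, 12)`; this point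
satisfies the symmetry-locus equation, and `Aut(ψ_c)` is nontrivial over `ℚ̄`. -/
theorem stmt_14 (c : ℚ) (hc0 : c ≠ 0) (hc4 : c ≠ 4)
    (r₁ r₂ r₃ : AlgebraicClosure ℚ)
    (hfactor : (C (c : AlgebraicClosure ℚ) * X^3 - 3*X + 1 : (AlgebraicClosure ℚ)[X]) =
      C (c : AlgebraicClosure ℚ) * ((X - C r₁) * (X - C r₂) * (X - C r₃)))
    (l₁ l₂ l₃ : AlgebraicClosure ℚ)
    (hl₁ : l₁ = (-2*(c : AlgebraicClosure ℚ)*r₁^2 + 2*c*r₁ - 2)/((c : AlgebraicClosure ℚ)*r₁^2 - 1)^2)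
    (hl₂ : l₂ = (-2*(c : AlgebraicClosure ℚ)*r₂^2 + 2*c*r₂ - 2)/((c : AlgebraicClosure ℚ)*r₂^2 - 1)^2)
    (hl₃ : l₃ = (-2*(c : AlgebraicClosure ℚ)*r₃^2 + 2*c*r₃ - 2)/((c : AlgebraicClosure ℚ)*r₃^2 - 1)^2) :
    l₁ + l₂ + l₃ = -6 ∧
    l₁*l₂ + l₁*l₃ + l₂*l₃ = 12 ∧
    -2*(-6 : ℚ)^3 - (-6 : ℚ)^2*12 + (-6 : ℚ)^2 + 8*(-6)*12 + 4*(12 : ℚ)^2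
      - 12*(-6 : ℚ) - 12*(12 : ℚ) + 36 = 0 ∧
    ∃ a b e d : AlgebraicClosure ℚ, a*d - b*e ≠ 0 ∧
      mobius a b e d ≠ (id : Option (AlgebraicClosure ℚ) → Option (AlgebraicClosure ℚ)) ∧
      (psiOpt (c : AlgebraicClosure ℚ)) ∘ (mobius a b e d) =
        (mobius a b e d) ∘ (psiOpt (c : AlgebraicClosure ℚ)) := by
  have hc0' : (c : AlgebraicClosure ℚ) ≠ 0 := by exact_mod_cast hc0
  have hc4' : (c : AlgebraicClosure ℚ) ≠ 4 := by exact_mod_cast hc4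
  have hroot := fun {r} (hr : r = r₁ ∨ r = r₂ ∨ r = r₃) =>
    multiplier_eq_neg_two hc4' (cubic_eq_zero_of_eq_C_mul_prod hfactor hr)
  obtain rfl : l₁ = -2 := hl₁.trans (hroot (.inl rfl))
  obtain rfl : l₂ = -2 := hl₂.trans (hroot (.inr (.inl rfl)))
  obtain rfl : l₃ = -2 := hl₃.trans (hroot (.inr (.inr rfl)))
  exact ⟨by norm_num, by norm_num, by norm_num, exists_mobius_ne_id_comm_psiOpt hc0' hc4'⟩

end
end
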